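/- Assume γ > β_p (in addition to β_p > β̂_p > 0). Then 1 − γ/β̂_p < 0 and 1 − γ/(αβ̂_p) < 0 (so neither endemic point E2 = (1 − γ/β̂_p, γ/β̂_p) nor E3 = (1 − γ/(αβ̂_p), γ/(αβ̂_p)) lies in the admissible region), and every solution (y, r) of the reduced hybrid SIRI dynamics (strengthened immunity) with y(0) ∈ (0,1] satisfies y'(t) ≤ (β_p − γ)·y(t) for all t ≥ 0; in particular y is nonincreasing, y(t) ≤ y(0)·exp((β_p − γ)t), and y(t) → 0 monotonically as t → ∞. -/

import Mathlib

/-- A solution of the reduced hybrid SIRI dynamics (strengthened immunity,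
β_p > β̂_p, so y*_int = c_P/(L(1−α)β_p) < ŷ*_int = c_P/(L(1−α)β̂_p)): a pair of
differentiable functions y, r : [0,∞) → ℝ with y ≥ 0, r ≥ 0, y + r ≤ 1,
following the five regimes of the hybrid dynamics, with a convex combination
(parametrized by z ∈ [0,1]) at the two thresholds. -/
def IsReducedSIRISolStrong (βp βhp α γ cP L : ℝ) (y r : ℝ → ℝ) : Prop :=
  (∀ t ≥ (0:ℝ), 0 ≤ y t ∧ 0 ≤ r t ∧ y t + r t ≤ 1) ∧
  ∀ t ≥ (0:ℝ),
    (y t < cP / (L * (1 - α) * βp) →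
      HasDerivAt y ((βp * (1 - r t - y t) + βhp * r t - γ) * y t) t ∧
      HasDerivAt r ((-(βhp * r t) + γ) * y t) t) ∧
    (y t = cP / (L * (1 - α) * βp) → ∃ z ∈ Set.Icc (0:ℝ) 1,
      HasDerivAt y
        (((z + α * (1 - z)) * βp * (1 - r t - y t) + βhp * r t - γ) * y t) t ∧
      HasDerivAt r ((-(βhp * r t) + γ) * y t) t) ∧
    (cP / (L * (1 - α) * βp) < y t ∧ y t < cP / (L * (1 - α) * βhp) →
      HasDerivAt y ((α * βp * (1 - r t - y t) + βhp * r t - γ) * y t) t ∧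
      HasDerivAt r ((-(βhp * r t) + γ) * y t) t) ∧
    (y t = cP / (L * (1 - α) * βhp) → ∃ z ∈ Set.Icc (0:ℝ) 1,
      HasDerivAt y
        ((α * βp * (1 - r t - y t) + (z + α * (1 - z)) * βhp * r t - γ) * y t) t ∧
      HasDerivAt r ((-((z + α * (1 - z)) * βhp * r t) + γ) * y t) t) ∧
    (cP / (L * (1 - α) * βhp) < y t →
      HasDerivAt y ((α * βp * (1 - r t - y t) + α * βhp * r t - γ) * y t) t ∧
      HasDerivAt r ((-(α * βhp * r t) + γ) * y t) t)

/-!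
Every regime of the hybrid dynamics has per-capita growth rate
`a β_p (1 - r - y) + b β̂_p r - γ` with switching factors `a, b ∈ [0, 1]`; since
`β̂_p ≤ β_p` this is at most `β_p (1 - y) - γ ≤ β_p - γ < 0`.
Hence `y' ≤ (β_p - γ) y ≤ 0`, and `y e^{-(β_p - γ) t}` is nonincreasing,
which gives the exponential bound and the decay.
-/

open Set Filter Topology Real

lemma add_mul_one_sub_mem_Icc {α z : ℝ} (hα : α ∈ Icc (0:ℝ) 1) (hz : z ∈ Icc (0:ℝ) 1) :
    z + α * (1 - z) ∈ Icc (0:ℝ) 1 := by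
  obtain ⟨hα0, hα1⟩ := hα
  obtain ⟨hz0, hz1⟩ := hz
  constructor <;> nlinarith

lemma switched_rate_le {βp βhp γ a b s r : ℝ} (hβ : βhp ≤ βp) (hβhp : 0 ≤ βhp)
    (ha : a ∈ Icc (0:ℝ) 1) (hb : b ∈ Icc (0:ℝ) 1) (hs : 0 ≤ s) (hr : 0 ≤ r)
    (hsr : s + r ≤ 1) :
    a * βp * s + b * βhp * r - γ ≤ βp - γ := by
  obtain ⟨ha0, ha1⟩ := ha
  obtain ⟨hb0, hb1⟩ := hb
  have hβp : 0 ≤ βp := hβhp.trans hβ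
  have hβps : a * βp * s ≤ βp * s := by
    nlinarith [mul_nonneg hβp hs]
  have hβhpr : b * βhp * r ≤ βp * r := by
    nlinarith [mul_nonneg hβhp hr, mul_nonneg (sub_nonneg.2 hβ) hr]
  nlinarith

lemma antitoneOn_Ici_of_hasDerivAt_nonpos {f : ℝ → ℝ} {a : ℝ}
    (hf : ∀ t ≥ a, ∃ f', HasDerivAt f f' t ∧ f' ≤ 0) : AntitoneOn f (Ici a) := by
  have hdiff : ∀ t ∈ Ici a, DifferentiableAt ℝ f t := fun t ht =>
    (hf t ht).choose_spec.1.differentiableAt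
  refine antitoneOn_of_deriv_nonpos (convex_Ici a)
    (fun t ht => (hdiff t ht).continuousAt.continuousWithinAt)
    (fun t ht => (hdiff t (interior_subset ht)).differentiableWithinAt) fun t ht => ?_
  obtain ⟨f', hf', hle⟩ := hf t (interior_subset ht)
  rwa [hf'.deriv]

lemma le_mul_exp_of_hasDerivAt_le_mul {f : ℝ → ℝ} {k : ℝ}
    (hf : ∀ t ≥ 0, ∃ f', HasDerivAt f f' t ∧ f' ≤ k * f t) {t : ℝ} (ht : 0 ≤ t) :
    f t ≤ f 0 * exp (k * t) := by
  set g : ℝ → ℝ := fun s => f s * exp (-(k * s))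
  have hg : AntitoneOn g (Ici 0) := antitoneOn_Ici_of_hasDerivAt_nonpos fun s hs => by
    obtain ⟨f', hf', hle⟩ := hf s hs
    have hexp : HasDerivAt (fun s => exp (-(k * s))) (exp (-(k * s)) * -(k * 1)) s :=
      (((hasDerivAt_id s).const_mul k).neg).exp
    refine ⟨(f' - k * f s) * exp (-(k * s)), (hf'.mul hexp).congr_deriv (by ring), ?_⟩
    exact mul_nonpos_of_nonpos_of_nonneg (by linarith) (exp_pos _).le
  have hgt : g t ≤ f 0 := by simpa [g] using hg self_mem_Ici ht ht
  calc f t = g t * exp (k * t) := by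
        simp only [g, mul_assoc, ← exp_add, neg_add_cancel, exp_zero, mul_one]
    _ ≤ f 0 * exp (k * t) := mul_le_mul_of_nonneg_right hgt (exp_pos _).le

lemma tendsto_zero_of_nonneg_of_le_mul_exp {f : ℝ → ℝ} {C k : ℝ} (hk : k < 0)
    (h0 : ∀ t ≥ 0, 0 ≤ f t) (hle : ∀ t ≥ 0, f t ≤ C * exp (k * t)) :
    Tendsto f atTop (𝓝 0) := by
  have hexp : Tendsto (fun t => C * exp (k * t)) atTop (𝓝 0) := by
    simpa using (tendsto_exp_atBot.comp
      ((tendsto_const_mul_atBot_of_neg hk).2 tendsto_id)).const_mul C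
  exact tendsto_of_tendsto_of_tendsto_of_le_of_le' tendsto_const_nhds hexp
    (eventually_ge_atTop 0 |>.mono h0) (eventually_ge_atTop 0 |>.mono hle)

theorem IsReducedSIRISolStrong.exists_hasDerivAt_le_mul {βp βhp α γ cP L : ℝ}
    {y r : ℝ → ℝ} (hsol : IsReducedSIRISolStrong βp βhp α γ cP L y r) (hβ : βhp ≤ βp)
    (hβhp : 0 ≤ βhp) (hα : α ∈ Icc (0:ℝ) 1) :
    ∀ t ≥ 0, ∃ y', HasDerivAt y y' t ∧ y' ≤ (βp - γ) * y t := by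
  intro t ht
  obtain ⟨hy, hr, hyr⟩ := hsol.1 t ht
  obtain ⟨h₁, h₂, h₃, h₄, h₅⟩ := hsol.2 t ht
  have hs : 0 ≤ 1 - r t - y t := by linarith
  have hsr : 1 - r t - y t + r t ≤ 1 := by linarith
  have one_mem : (1:ℝ) ∈ Icc (0:ℝ) 1 := right_mem_Icc.2 zero_le_one
  have rate_le : ∀ a b, a ∈ Icc (0:ℝ) 1 → b ∈ Icc (0:ℝ) 1 →
      (a * βp * (1 - r t - y t) + b * βhp * r t - γ) * y t ≤ (βp - γ) * y t :=
    fun a b ha hb => mul_le_mul_of_nonneg_right (switched_rate_le hβ hβhp ha hb hs hr hsr) hy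
  rcases lt_trichotomy (y t) (cP / (L * (1 - α) * βp)) with hlt | heq | hgt
  · exact ⟨_, (h₁ hlt).1, by simpa using rate_le 1 1 one_mem one_mem⟩
  · obtain ⟨z, hz, hdy, -⟩ := h₂ heq
    exact ⟨_, hdy, by simpa using rate_le _ 1 (add_mul_one_sub_mem_Icc hα hz) one_mem⟩
  rcases lt_trichotomy (y t) (cP / (L * (1 - α) * βhp)) with hlt' | heq' | hgt'
  · exact ⟨_, (h₃ ⟨hgt, hlt'⟩).1, by simpa using rate_le α 1 hα one_mem⟩
  · obtain ⟨z, hz, hdy, -⟩ := h₄ heq'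
    exact ⟨_, hdy, rate_le α _ hα (add_mul_one_sub_mem_Icc hα hz)⟩
  · exact ⟨_, (h₅ hgt').1, rate_le α α hα hα⟩

theorem reduced_siri_strong_diseasefree_general
    (βp βhp α γ cP L : ℝ)
    (hβ : βp > βhp) (hβhp : βhp > 0) (hα : α ∈ Set.Ioo (0:ℝ) 1)
    (hγβ : γ > βp) :
    1 - γ / βhp < 0 ∧ 1 - γ / (α * βhp) < 0 ∧
    ∀ y r : ℝ → ℝ, IsReducedSIRISolStrong βp βhp α γ cP L y r →
      y 0 ∈ Set.Ioc (0:ℝ) 1 →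
      (∀ t ≥ (0:ℝ), deriv y t ≤ (βp - γ) * y t) ∧
      AntitoneOn y (Set.Ici 0) ∧
      (∀ t ≥ (0:ℝ), y t ≤ y 0 * Real.exp ((βp - γ) * t)) ∧
      Filter.Tendsto y Filter.atTop (nhds 0) := by
  obtain ⟨hα0, hα1⟩ := hα
  have hαβhp : α * βhp < βhp := mul_lt_of_lt_one_left hβhp hα1
  refine ⟨by linarith [(one_lt_div hβhp).2 (hβ.trans hγβ)],
    by linarith [(one_lt_div (mul_pos hα0 hβhp)).2 ((hαβhp.trans hβ).trans hγβ)],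
    fun y r hsol _ => ?_⟩
  have hrate := hsol.exists_hasDerivAt_le_mul hβ.le hβhp.le ⟨hα0.le, hα1.le⟩
  have hy : ∀ t ≥ 0, 0 ≤ y t := fun t ht => (hsol.1 t ht).1
  have hexp : ∀ t ≥ 0, y t ≤ y 0 * exp ((βp - γ) * t) := fun t ht =>
    le_mul_exp_of_hasDerivAt_le_mul hrate ht
  refine ⟨fun t ht => ?_, antitoneOn_Ici_of_hasDerivAt_nonpos fun t ht => ?_, hexp,
    tendsto_zero_of_nonneg_of_le_mul_exp (by linarith) hy hexp⟩
  · obtain ⟨y', hy', hle⟩ := hrate t ht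
    rwa [hy'.deriv]
  · obtain ⟨y', hy', hle⟩ := hrate t ht
    exact ⟨y', hy', hle.trans (mul_nonpos_of_nonpos_of_nonneg (by linarith) (hy t ht))⟩

/-- If γ > β_p (> β̂_p), then the endemic levels 1 − γ/β̂_p and
1 − γ/(αβ̂_p) are negative (so neither E2 nor E3 is admissible), and every
solution of the reduced hybrid SIRI dynamics (strengthened immunity) with
y(0) ∈ (0,1] satisfies y'(t) ≤ (β_p − γ)y(t); in particular y is nonincreasing,
satisfies y(t) ≤ y(0)·exp((β_p − γ)t), and converges monotonically to 0. -/
theorem reduced_siri_strong_diseasefree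
    (βp βhp α γ cP L : ℝ)
    (hβ : βp > βhp) (hβhp : βhp > 0) (hα : α ∈ Set.Ioo (0:ℝ) 1)
    (hγβ : γ > βp) (hcP : cP > 0) (hL : L > 0) :
    1 - γ / βhp < 0 ∧ 1 - γ / (α * βhp) < 0 ∧
    ∀ y r : ℝ → ℝ, IsReducedSIRISolStrong βp βhp α γ cP L y r →
      y 0 ∈ Set.Ioc (0:ℝ) 1 →
      (∀ t ≥ (0:ℝ), deriv y t ≤ (βp - γ) * y t) ∧
      AntitoneOn y (Set.Ici 0) ∧
      (∀ t ≥ (0:ℝ), y t ≤ y 0 * Real.exp ((βp - γ) * t)) ∧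
      Filter.Tendsto y Filter.atTop (nhds 0) :=
  reduced_siri_strong_diseasefree_general βp βhp α γ cP L hβ hβhp hα hγβ
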